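/- Let G = (V,E) be a finite simple graph, v a vertex of G, E_v ⊆ E the set of edges containing v, and E' = E \ E_v. If |E_v| ≤ 2, then the generic stress numbers satisfy s(E') = s(E). If |E_v| ≥ 3, then s(E) − (|E_v| − 2) ≤ s(E') ≤ s(E). -/

import Mathlib

noncomputable section

open Classical in
/-- The edge vector of the pair `(i, j)` under the realization `p`: the function `V → ℝ × ℝ`
whose value is `p i - p j` at `i`, `p j - p i` at `j`, and `0` elsewhere. -/
def edgeVec {V : Type*} (p : V → ℝ × ℝ) (i j : V) : V → ℝ × ℝ :=
  fun v => if v = i then p i - p j else if v = j then p j - p i else 0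

/-- The set of edge vectors of a set `F` of (potential) edges under the realization `p`. -/
def edgeVecs {V : Type*} (p : V → ℝ × ℝ) (F : Set (Sym2 V)) : Set (V → ℝ × ℝ) :=
  {x | ∃ i j, s(i, j) ∈ F ∧ x = edgeVec p i j}

/-- The rank of the edge vectors of `F` under the realization `p`. -/
def rankOf {V : Type*} (p : V → ℝ × ℝ) (F : Set (Sym2 V)) : ℕ :=
  Module.finrank ℝ (Submodule.span ℝ (edgeVecs p F))

/-- The generic rank of a set of edges: the maximum over all realizations `p` of the rank. -/
def genRankSet {V : Type*} (F : Set (Sym2 V)) : ℕ :=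
  ⨆ p : V → ℝ × ℝ, rankOf p F

/-- The generic rank `r(G)` of a graph. -/
def genRank {V : Type*} (G : SimpleGraph V) : ℕ := genRankSet G.edgeSet

/-- The stress number `s_p(F)` of a set of edges under the realization `p`
(the dimension of the space of resolvable stresses). -/
def stressNum {V : Type*} (p : V → ℝ × ℝ) (F : Set (Sym2 V)) : ℕ :=
  F.ncard - rankOf p F

/-- The generic stress number `s(F)` of a set of edges. -/
def genStressSet {V : Type*} (F : Set (Sym2 V)) : ℕ := F.ncard - genRankSet F

/-- The generic stress number `s(G)` of a graph. -/
def genStress {V : Type*} (G : SimpleGraph V) : ℕ := G.edgeSet.ncard - genRank G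

/-- A planar configuration is in general position if it is injective and no three distinct
vertices have collinear images. -/
def GeneralPosition {V : Type*} (p : V → ℝ × ℝ) : Prop :=
  Function.Injective p ∧
    ∀ i j k : V, i ≠ j → j ≠ k → i ≠ k →
      ¬ Collinear ℝ ({p i, p j, p k} : Set (ℝ × ℝ))

/-- `W_U`: the subspace of functions `V → ℝ × ℝ` vanishing at every vertex outside `U`. -/
def vanishOn {V : Type*} (U : Set V) : Submodule ℝ (V → ℝ × ℝ) where
  carrier := {f | ∀ v ∉ U, f v = 0}
  zero_mem' := fun v _ => rfl
  add_mem' := by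
    intro a b ha hb v hv
    simp [Pi.add_apply, ha v hv, hb v hv]
  smul_mem' := by
    intro c f hf v hv
    simp [Pi.smul_apply, hf v hv]

end

/-!
Write `E' = E \ E_v`, `k = |E_v|` and `s = |F| - r(F)` with `r` the generic rank. Adding `k` edges
raises the rank by at most `k`, which gives `s(E') ≤ s(E)`. For the other bound, `r(E) ≥ r(E') +
min 2 k`: maximal rank is an open condition on the realization `p` and `p u₁ ≠ p u₂` a dense one,
so some generic realization of `E'` separates two neighbours `u₁, u₂` of `v`. The vertex `v` is
not in `E'`, so it can then be moved to a point with `p v - p u₁` and `p v - p u₂` independent;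
the edge vectors of `E'` vanish at `v`, so the two edges at `v` add `2` to the rank.
-/

open Module Topology Submodule

section EdgeVectors

variable {V : Type*}

lemma edgeVec_self (p : V → ℝ × ℝ) (i j : V) : edgeVec p i j i = p i - p j := by
  simp [edgeVec]

lemma edgeVec_of_ne (p : V → ℝ × ℝ) {i j w : V} (hi : w ≠ i) (hj : w ≠ j) :
    edgeVec p i j w = 0 := by
  simp [edgeVec, hi, hj]

lemma edgeVec_comm (p : V → ℝ × ℝ) (i j : V) : edgeVec p i j = edgeVec p j i := by
  funext w
  unfold edgeVec
  split_ifs <;> simp_all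

lemma edgeVec_congr {p q : V → ℝ × ℝ} {i j : V} (hi : p i = q i) (hj : p j = q j) :
    edgeVec p i j = edgeVec q i j := by
  funext w
  simp only [edgeVec, hi, hj]

noncomputable def edgeVecSym (p : V → ℝ × ℝ) : Sym2 V → V → ℝ × ℝ :=
  Sym2.lift ⟨edgeVec p, edgeVec_comm p⟩

@[simp]
lemma edgeVecSym_mk (p : V → ℝ × ℝ) (i j : V) : edgeVecSym p s(i, j) = edgeVec p i j := rfl

lemma continuous_edgeVecSym (e : Sym2 V) :
    Continuous fun p : V → ℝ × ℝ => edgeVecSym p e := by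
  induction e using Sym2.ind with
  | _ i j =>
    refine continuous_pi fun w => ?_
    simp only [edgeVecSym_mk, edgeVec]
    split_ifs <;> fun_prop

lemma edgeVecs_eq_image (p : V → ℝ × ℝ) (F : Set (Sym2 V)) :
    edgeVecs p F = edgeVecSym p '' F := by
  ext x
  constructor
  · rintro ⟨i, j, hij, rfl⟩
    exact ⟨s(i, j), hij, rfl⟩
  · rintro ⟨e, he, rfl⟩
    induction e using Sym2.ind with
    | _ i j => exact ⟨i, j, he, rfl⟩

lemma edgeVecs_eq_range (p : V → ℝ × ℝ) (F : Set (Sym2 V)) :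
    edgeVecs p F = Set.range fun e : F => edgeVecSym p e := by
  rw [edgeVecs_eq_image, Set.image_eq_range]

lemma span_edgeVecs_le_ker_proj {p : V → ℝ × ℝ} {F : Set (Sym2 V)} {v : V}
    (hv : ∀ e ∈ F, v ∉ e) :
    span ℝ (edgeVecs p F) ≤ LinearMap.ker (LinearMap.proj v : (V → ℝ × ℝ) →ₗ[ℝ] ℝ × ℝ) := by
  rw [span_le]
  rintro _ ⟨i, j, hij, rfl⟩
  exact edgeVec_of_ne p (fun h => hv _ hij (h ▸ Sym2.mem_mk_left i j))
    (fun h => hv _ hij (h ▸ Sym2.mem_mk_right i j))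

lemma rankOf_congr {p q : V → ℝ × ℝ} {F : Set (Sym2 V)}
    (h : ∀ e ∈ F, ∀ i ∈ e, p i = q i) : rankOf p F = rankOf q F := by
  rw [rankOf, rankOf, edgeVecs_eq_image, edgeVecs_eq_image, Set.image_congr]
  intro e he
  induction e using Sym2.ind with
  | _ i j =>
    exact edgeVec_congr (h _ he i (Sym2.mem_mk_left i j)) (h _ he j (Sym2.mem_mk_right i j))

lemma genRankSet_le {F : Set (Sym2 V)} {c : ℕ} (h : ∀ p : V → ℝ × ℝ, rankOf p F ≤ c) :
    genRankSet F ≤ c :=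
  ciSup_le h

lemma dense_setOf_apply_ne {u₁ u₂ : V} (h : u₁ ≠ u₂) :
    Dense {p : V → ℝ × ℝ | p u₁ ≠ p u₂} := by
  classical
  let f : (V → ℝ × ℝ) →ₗ[ℝ] ℝ × ℝ :=
    (LinearMap.proj u₁ : (V → ℝ × ℝ) →ₗ[ℝ] ℝ × ℝ) - LinearMap.proj u₂
  have hf : Function.Surjective f := fun w => ⟨Pi.single u₁ w, by simp [f, h.symm]⟩
  convert (dense_compl_singleton (0 : ℝ × ℝ)).preimage
    (f.isOpenMap_of_finiteDimensional hf) using 1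
  ext p
  simp [f, sub_eq_zero]

end EdgeVectors

section Rank

variable {V : Type*} [Finite V]

lemma rankOf_mono (p : V → ℝ × ℝ) {F F' : Set (Sym2 V)} (h : F ⊆ F') :
    rankOf p F ≤ rankOf p F' := by
  refine finrank_mono (span_mono ?_)
  rw [edgeVecs_eq_image, edgeVecs_eq_image]
  exact Set.image_mono h

lemma rankOf_le_ncard (p : V → ℝ × ℝ) (F : Set (Sym2 V)) : rankOf p F ≤ F.ncard := by
  have := Fintype.ofFinite F
  rw [rankOf, edgeVecs_eq_range, ← Nat.card_coe_set_eq, Nat.card_eq_fintype_card]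
  exact finrank_range_le_card _

lemma rankOf_union_le (p : V → ℝ × ℝ) (F F' : Set (Sym2 V)) :
    rankOf p (F ∪ F') ≤ rankOf p F + rankOf p F' := by
  rw [rankOf, edgeVecs_eq_image, Set.image_union, span_union, ← edgeVecs_eq_image,
    ← edgeVecs_eq_image]
  exact finrank_add_le_finrank_add_finrank _ _

lemma bddAbove_range_rankOf (F : Set (Sym2 V)) :
    BddAbove (Set.range fun p : V → ℝ × ℝ => rankOf p F) :=
  ⟨finrank ℝ (V → ℝ × ℝ), by rintro _ ⟨p, rfl⟩; exact finrank_le _⟩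

lemma rankOf_le_genRankSet (p : V → ℝ × ℝ) (F : Set (Sym2 V)) :
    rankOf p F ≤ genRankSet F :=
  le_ciSup (bddAbove_range_rankOf F) p

lemma exists_rankOf_eq_genRankSet (F : Set (Sym2 V)) :
    ∃ p : V → ℝ × ℝ, rankOf p F = genRankSet F :=
  Nat.sSup_mem (Set.range_nonempty _) (bddAbove_range_rankOf F)

lemma genRankSet_le_ncard (F : Set (Sym2 V)) : genRankSet F ≤ F.ncard :=
  genRankSet_le fun p => rankOf_le_ncard p F

lemma genRankSet_mono {F F' : Set (Sym2 V)} (h : F ⊆ F') : genRankSet F ≤ genRankSet F' :=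
  genRankSet_le fun p => (rankOf_mono p h).trans (rankOf_le_genRankSet p F')

lemma genRankSet_union_le (F F' : Set (Sym2 V)) :
    genRankSet (F ∪ F') ≤ genRankSet F + F'.ncard :=
  genRankSet_le fun p => (rankOf_union_le p F F').trans
    (add_le_add (rankOf_le_genRankSet p F) (rankOf_le_ncard p F'))

lemma rankOf_add_card_le {ι : Type*} [Fintype ι] {p : V → ℝ × ℝ} {F F' : Set (Sym2 V)}
    {v : V} {u : ι → V} (hsub : F' ⊆ F) (hv : ∀ e ∈ F', v ∉ e) (hu : ∀ k, s(v, u k) ∈ F)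
    (hli : LinearIndependent ℝ fun k => p v - p (u k)) :
    rankOf p F' + Fintype.card ι ≤ rankOf p F := by
  let x k := edgeVec p v (u k)
  let ev : (V → ℝ × ℝ) →ₗ[ℝ] ℝ × ℝ := LinearMap.proj v
  have hev : ev ∘ x = fun k => p v - p (u k) := funext fun k => edgeVec_self p v (u k)
  have hli' : LinearIndependent ℝ (ev ∘ x) := hev ▸ hli
  have hdisj : Disjoint (span ℝ (edgeVecs p F')) (span ℝ (Set.range x)) :=
    ((range_ker_disjoint hli').mono_right (span_edgeVecs_le_ker_proj hv)).symm
  have hle : span ℝ (edgeVecs p F') ⊔ span ℝ (Set.range x) ≤ span ℝ (edgeVecs p F) := by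
    refine sup_le (span_mono ?_) (span_le.mpr ?_)
    · rw [edgeVecs_eq_image, edgeVecs_eq_image]
      exact Set.image_mono hsub
    · rintro _ ⟨k, rfl⟩
      exact subset_span ⟨v, u k, hu k, rfl⟩
  calc rankOf p F' + Fintype.card ι
      = finrank ℝ ↥(span ℝ (edgeVecs p F') ⊔ span ℝ (Set.range x)) := by
        rw [rankOf, ← finrank_span_eq_card (hli'.of_comp), ← finrank_sup_add_finrank_inf_eq,
          hdisj.eq_bot, finrank_bot, add_zero]
    _ ≤ rankOf p F := finrank_mono hle

end Rank

section Generic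

variable {V : Type*} [Fintype V]

lemma eventually_rankOf_le_rankOf (p₀ : V → ℝ × ℝ) (F : Set (Sym2 V)) :
    ∀ᶠ p in 𝓝 p₀, rankOf p₀ F ≤ rankOf p F := by
  obtain ⟨κ, a, -, hspan, hli⟩ := exists_linearIndependent' ℝ fun e : F => edgeVecSym p₀ e
  have := hli.finite
  have := Fintype.ofFinite κ
  have hcont : Continuous fun (p : V → ℝ × ℝ) (k : κ) => edgeVecSym p (a k) :=
    continuous_pi fun k => continuous_edgeVecSym _
  filter_upwards [hcont.continuousAt.eventually hli.eventually] with p hp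
  calc rankOf p₀ F = Fintype.card κ := by
        rw [rankOf, edgeVecs_eq_range, ← hspan, finrank_span_eq_card hli]
    _ = finrank ℝ (span ℝ (Set.range fun k => edgeVecSym p (a k))) :=
        (finrank_span_eq_card hp).symm
    _ ≤ rankOf p F := by
        refine finrank_mono (span_mono ?_)
        rw [edgeVecs_eq_range]
        exact Set.range_comp_subset_range a fun e : F => edgeVecSym p e

lemma exists_rankOf_eq_genRankSet_of_ne (F : Set (Sym2 V)) {u₁ u₂ : V} (h : u₁ ≠ u₂) :
    ∃ p : V → ℝ × ℝ, rankOf p F = genRankSet F ∧ p u₁ ≠ p u₂ := by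
  obtain ⟨p₀, hp₀⟩ := exists_rankOf_eq_genRankSet F
  obtain ⟨p, hne, hp⟩ :=
    (dense_setOf_apply_ne h).inter_nhds_nonempty (eventually_rankOf_le_rankOf p₀ F)
  exact ⟨p, (rankOf_le_genRankSet p F).antisymm (hp₀ ▸ hp), hne⟩

variable {F F' : Set (Sym2 V)} {v : V}

lemma genRankSet_add_one_le {u : V} (hsub : F' ⊆ F) (hv : ∀ e ∈ F', v ∉ e)
    (hu : s(v, u) ∈ F) (hvu : v ≠ u) :
    genRankSet F' + 1 ≤ genRankSet F := by
  obtain ⟨p, hp, hne⟩ := exists_rankOf_eq_genRankSet_of_ne F' hvu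
  have hli : LinearIndependent ℝ fun _ : Unit => p v - p u :=
    linearIndependent_unique_iff.mpr (sub_ne_zero.mpr hne)
  calc genRankSet F' + 1 = rankOf p F' + Fintype.card Unit := by rw [hp, Fintype.card_unit]
    _ ≤ rankOf p F := rankOf_add_card_le hsub hv (fun _ => hu) hli
    _ ≤ genRankSet F := rankOf_le_genRankSet p F

lemma genRankSet_add_two_le {u₁ u₂ : V} (hsub : F' ⊆ F) (hv : ∀ e ∈ F', v ∉ e)
    (hu₁ : s(v, u₁) ∈ F) (hu₂ : s(v, u₂) ∈ F) (hvu₁ : v ≠ u₁) (hvu₂ : v ≠ u₂)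
    (hu : u₁ ≠ u₂) :
    genRankSet F' + 2 ≤ genRankSet F := by
  classical
  obtain ⟨p, hp, hne⟩ := exists_rankOf_eq_genRankSet_of_ne F' hu
  obtain ⟨y, hy⟩ := exists_linearIndependent_pair_of_one_lt_finrank
    (by simp : 1 < finrank ℝ (ℝ × ℝ)) (sub_ne_zero.mpr hne)
  let q := Function.update p v (p u₁ + y)
  have hq : rankOf q F' = rankOf p F' :=
    rankOf_congr fun e he i hi =>
      Function.update_of_ne (fun (h : i = v) => hv e he (h ▸ hi)) _ _
  have hli : LinearIndependent ℝ ![q v - q u₁, q v - q u₂] := by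
    have hq₁ : q v - q u₁ = y := by simp [q, hvu₁.symm]
    have hq₂ : q v - q u₂ = y + (p u₁ - p u₂) := by simp [q, hvu₂.symm]; abel
    rw [hq₁, hq₂, LinearIndependent.pair_iff]
    rw [LinearIndependent.pair_iff] at hy
    intro s t hst
    obtain ⟨ht, hsum⟩ := hy t (s + t) (by rw [← hst]; module)
    exact ⟨by linarith, ht⟩
  have hu' : ∀ k, s(v, ![u₁, u₂] k) ∈ F := Fin.forall_fin_two.mpr ⟨hu₁, hu₂⟩
  have hli' : LinearIndependent ℝ fun k => q v - q (![u₁, u₂] k) := by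
    convert hli using 1
    funext k
    fin_cases k <;> rfl
  calc genRankSet F' + 2 = rankOf q F' + Fintype.card (Fin 2) := by
        rw [hq, hp, Fintype.card_fin]
    _ ≤ rankOf q F := rankOf_add_card_le hsub hv hu' hli'
    _ ≤ genRankSet F := rankOf_le_genRankSet q F

end Generic

lemma genRankSet_diff_incidenceSet_add_min_le {V : Type*} [Fintype V] (G : SimpleGraph V)
    (v : V) :
    genRankSet (G.edgeSet \ G.incidenceSet v) + min 2 (G.incidenceSet v).ncard ≤
      genRankSet G.edgeSet := by
  classical
  have hsub : G.edgeSet \ G.incidenceSet v ⊆ G.edgeSet := Set.sdiff_subset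
  have hv : ∀ e ∈ G.edgeSet \ G.incidenceSet v, v ∉ e := fun e he hve => he.2 ⟨he.1, hve⟩
  have hcard : (G.incidenceSet v).ncard = (G.neighborSet v).ncard :=
    Nat.card_congr (G.incidenceSetEquivNeighborSet v)
  rw [hcard]
  obtain h | h | h : (G.neighborSet v).ncard = 0 ∨ (G.neighborSet v).ncard = 1 ∨
      1 < (G.neighborSet v).ncard := by omega
  · simpa [h] using genRankSet_mono hsub
  · obtain ⟨u, hu⟩ := Set.ncard_eq_one.mp h
    have hadj : G.Adj v u := (G.mem_neighborSet v u).mp (hu ▸ rfl)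
    simpa [h] using genRankSet_add_one_le hsub hv hadj hadj.ne
  · obtain ⟨u₁, u₂, hu₁, hu₂, hu⟩ := (Set.one_lt_ncard_iff (Set.toFinite _)).mp h
    rw [min_eq_left (Nat.succ_le_of_lt h)]
    exact genRankSet_add_two_le hsub hv hu₁ hu₂ (G.ne_of_adj hu₁) (G.ne_of_adj hu₂) hu

/-- Let `E_v` be the set of edges of `G` containing the vertex `v` and `E' = E \ E_v`.
If `|E_v| ≤ 2` then `s(E') = s(E)`; if `|E_v| ≥ 3` then
`s(E) - (|E_v| - 2) ≤ s(E') ≤ s(E)`. -/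
theorem genStress_delete_vertex {V : Type*} [Fintype V] (G : SimpleGraph V) (v : V)
    (Ev : Set (Sym2 V)) (hEv : Ev = {e ∈ G.edgeSet | v ∈ e}) :
    (Ev.ncard ≤ 2 → genStressSet (G.edgeSet \ Ev) = genStressSet G.edgeSet) ∧
    (3 ≤ Ev.ncard →
      genStressSet G.edgeSet - (Ev.ncard - 2) ≤ genStressSet (G.edgeSet \ Ev) ∧
      genStressSet (G.edgeSet \ Ev) ≤ genStressSet G.edgeSet) := by
  change Ev = G.incidenceSet v at hEv
  subst hEv
  have hsub := G.incidenceSet_subset v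
  have hcard := Set.ncard_sdiff_add_ncard_of_subset hsub
  have hupper : genRankSet G.edgeSet ≤
      genRankSet (G.edgeSet \ G.incidenceSet v) + (G.incidenceSet v).ncard := by
    simpa [Set.sdiff_union_of_subset hsub] using
      genRankSet_union_le (G.edgeSet \ G.incidenceSet v) (G.incidenceSet v)
  have hlower := genRankSet_diff_incidenceSet_add_min_le G v
  have hE' := genRankSet_le_ncard (G.edgeSet \ G.incidenceSet v)
  have hE := genRankSet_le_ncard G.edgeSet
  unfold genStressSet
  omega
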